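/- Let n ≥ 3 and let F : ℝⁿ × ℝⁿ → ℝ^{n(n−1)} be the map whose components, indexed by ordered pairs (i,j) with i ≠ j, are F(u,v)_{(i,j)} = uᵢvⱼ. Then at every point (u,v) with all coordinates uᵢ and vⱼ nonzero, the Jacobian matrix of F (with respect to the 2n variables u₁,…,uₙ,v₁,…,vₙ) has rank exactly 2n − 1. -/

import Mathlib

/-!
Write `q = (u, v)`. The Jacobian is the matrix of the differential
`c ↦ (uᵢ c_{v_j} + v_j c_{u_i})_{i ≠ j}`. Dividing the `(i, j)` kernel equation by `uᵢ vⱼ` shows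
that `aᵢ = c_{u_i} / uᵢ` and `bⱼ = c_{v_j} / vⱼ` satisfy `aᵢ + bⱼ = 0` whenever `i ≠ j`; with at
least three indices this forces `a` to be constant and `b = -a`. So the kernel is the line through
`(u, -v)`, the tangent to the orbit `(u, v) ↦ (t u, t⁻¹ v)` along which `F` is constant, and the
rank is `2n - 1`.
-/

open Matrix Function Sum

theorem exists_eq_const_of_add_eq_zero {ι G : Type*} [AddCommGroup G] (hι : 3 ≤ ENat.card ι)
    {a b : ι → G} (h : ∀ i j, i ≠ j → a i + b j = 0) :
    ∃ t : G, a = const ι t ∧ b = const ι (-t) := by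
  have hb : ∀ i j, i ≠ j → b j = -a i := fun i j hij => eq_neg_of_add_eq_zero_right (h i j hij)
  obtain ⟨i₀⟩ : Nonempty ι := (ENat.card_pos_iff_nonempty ι).1 (lt_of_lt_of_le (by norm_num) hι)
  have ha : ∀ i, a i = a i₀ := fun i => by
    obtain ⟨j, hji, hji₀⟩ := ENat.exists_ne_ne_of_three_le hι i i₀
    exact neg_inj.1 ((hb i j hji.symm).symm.trans (hb i₀ j hji₀.symm))
  refine ⟨a i₀, funext ha, funext fun j => ?_⟩
  obtain ⟨i, hij, -⟩ := ENat.exists_ne_ne_of_three_le hι j j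
  rw [hb i j hij, ha, const_apply]

theorem fderiv_apply_mul_apply {𝕜 ι : Type*} [NontriviallyNormedField 𝕜] [Fintype ι]
    (a b : ι) (q v : ι → 𝕜) :
    fderiv 𝕜 (fun r : ι → 𝕜 => r a * r b) q v = q a * v b + q b * v a := by
  rw [HasFDerivAt.fderiv (f := fun r : ι → 𝕜 => r a * r b)
    ((hasFDerivAt_apply a q).mul (hasFDerivAt_apply b q))]
  simp

theorem LinearMap.rank_toMatrix' {R m n : Type*} [CommRing R] [Fintype n] [DecidableEq n]
    (f : (n → R) →ₗ[R] m → R) :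
    (LinearMap.toMatrix' f).rank = Module.finrank R (LinearMap.range f) :=
  congrArg (fun g => Module.finrank R (LinearMap.range g)) (Matrix.toLin'_toMatrix' f)

section OffDiagonalProduct

variable {ι : Type*}

def offDiagProductDeriv (q : ι ⊕ ι → ℝ) :
    (ι ⊕ ι → ℝ) →ₗ[ℝ] ({p : ι × ι // p.1 ≠ p.2} → ℝ) where
  toFun c p := q (inl p.1.1) * c (inr p.1.2) + q (inr p.1.2) * c (inl p.1.1)
  map_add' _ _ := by ext; simp only [Pi.add_apply]; ring
  map_smul' _ _ := by ext; simp only [Pi.smul_apply, smul_eq_mul, RingHom.id_apply]; ring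

theorem jacobian_eq_toMatrix'_offDiagProductDeriv [Fintype ι] [DecidableEq ι] (q : ι ⊕ ι → ℝ) :
    (of fun (p : {p : ι × ι // p.1 ≠ p.2}) (k : ι ⊕ ι) =>
        fderiv ℝ (fun r : ι ⊕ ι → ℝ => r (inl p.1.1) * r (inr p.1.2)) q (Pi.single k 1))
      = LinearMap.toMatrix' (offDiagProductDeriv q) := by
  ext p k
  rw [LinearMap.toMatrix'_apply, of_apply, fderiv_apply_mul_apply]
  rfl

theorem ker_offDiagProductDeriv (hι : 3 ≤ ENat.card ι) {q : ι ⊕ ι → ℝ} (hq : ∀ k, q k ≠ 0) :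
    LinearMap.ker (offDiagProductDeriv q) = ℝ ∙ Sum.elim (q ∘ inl) (-(q ∘ inr)) := by
  refine le_antisymm (fun c hc => ?_) ?_
  · have hab : ∀ i j, i ≠ j → c (inl i) / q (inl i) + c (inr j) / q (inr j) = 0 := by
      intro i j hij
      have hker : q (inl i) * c (inr j) + q (inr j) * c (inl i) = 0 :=
        congrFun (LinearMap.mem_ker.1 hc) ⟨(i, j), hij⟩
      have hu := hq (inl i)
      have hv := hq (inr j)
      field_simp
      linear_combination hker
    obtain ⟨t, ha, hb⟩ := exists_eq_const_of_add_eq_zero hι hab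
    refine Submodule.mem_span_singleton.2 ⟨t, funext fun k => ?_⟩
    cases k with
    | inl i =>
      have := congrFun ha i
      rw [const_apply, div_eq_iff (hq _)] at this
      simp [this]
    | inr j =>
      have := congrFun hb j
      rw [const_apply, div_eq_iff (hq _)] at this
      simp [this]
  · rw [Submodule.span_le, Set.singleton_subset_iff, SetLike.mem_coe, LinearMap.mem_ker]
    ext p
    simp [offDiagProductDeriv]
    ring

theorem finrank_range_offDiagProductDeriv [Fintype ι] (hι : 3 ≤ Fintype.card ι)
    {q : ι ⊕ ι → ℝ} (hq : ∀ k, q k ≠ 0) :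
    Module.finrank ℝ (LinearMap.range (offDiagProductDeriv q)) = 2 * Fintype.card ι - 1 := by
  obtain ⟨i⟩ : Nonempty ι := Fintype.card_pos_iff.1 (by omega)
  have hv : Sum.elim (q ∘ inl) (-(q ∘ inr)) ≠ 0 := fun h => hq (inl i) (congrFun h (inl i))
  have := (offDiagProductDeriv q).finrank_range_add_finrank_ker
  rw [ker_offDiagProductDeriv (by simpa [ENat.card_eq_coe_fintype_card] using hι) hq,
    finrank_span_singleton hv, Module.finrank_fintype_fun_eq_card, Fintype.card_sum] at this
  omega

end OffDiagonalProduct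

/-- For `n ≥ 3`, the map `F` sends `(u, v)` (packed as a single function
`q : Fin n ⊕ Fin n → ℝ`, with `u i = q (Sum.inl i)` and `v j = q (Sum.inr j)`)
to the family of all products `uᵢ vⱼ` with `i ≠ j`.  Its Jacobian at `q` is the
`n(n-1) × 2n` matrix of partial derivatives with respect to the `2n` variables;
at every point with all coordinates nonzero it has rank exactly `2n - 1`. -/
theorem jacobian_rank_eq_two_n_sub_one (n : ℕ) (hn : 3 ≤ n)
    (q : (Fin n ⊕ Fin n) → ℝ) (hq : ∀ k, q k ≠ 0) :
    (Matrix.of fun (p : {p : Fin n × Fin n // p.1 ≠ p.2}) (k : Fin n ⊕ Fin n) =>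
        fderiv ℝ (fun r : (Fin n ⊕ Fin n) → ℝ =>
          r (Sum.inl p.1.1) * r (Sum.inr p.1.2)) q (Pi.single k 1)).rank
      = 2 * n - 1 := by
  rw [jacobian_eq_toMatrix'_offDiagProductDeriv, LinearMap.rank_toMatrix',
    finrank_range_offDiagProductDeriv (by simpa using hn) hq, Fintype.card_fin]
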